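/- For compact operators S and T on a separable Hilbert space, the (j+k)-th singular value of S+T is at most the sum of the j-th singular value of S and the k-th singular value of T, i.e., μ_{j+k}(S+T) ≤ μ_j(S) + μ_k(T). -/

import Mathlib

open Filter Topology

variable {H : Type*} [NormedAddCommGroup H] [InnerProductSpace ℂ H] [CompleteSpace H]

/-- The `j`-th singular value of a bounded operator (approximation number):
for compact operators this is the `(j+1)`-th eigenvalue of `|T|` in decreasing order. -/
noncomputable def mu (T : H →L[ℂ] H) (j : ℕ) : ℝ :=
  sInf {c : ℝ | ∃ F : H →L[ℂ] H, FiniteDimensional ℂ (LinearMap.range F.toLinearMap) ∧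
    Module.finrank ℂ (LinearMap.range F.toLinearMap) ≤ j ∧ c = ‖T - F‖}

/-! If `F` and `G` have rank at most `j` and `k`, then `F + G` has rank at most `j + k` and
approximates `S + T` within `‖S - F‖ + ‖T - G‖`; taking infima over `F` and then over `G` gives
the inequality. -/

namespace LinearMap

variable {K V W : Type*} [DivisionRing K] [AddCommGroup V] [Module K V] [AddCommGroup W]
  [Module K W] (f g : V →ₗ[K] W) [FiniteDimensional K (range f)] [FiniteDimensional K (range g)]

instance finiteDimensional_range_add : FiniteDimensional K (range (f + g)) :=
  Submodule.finiteDimensional_of_le (range_add_le f g)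

theorem finrank_range_add_le :
    Module.finrank K (range (f + g)) ≤ Module.finrank K (range f) + Module.finrank K (range g) :=
  (Submodule.finrank_mono (range_add_le f g)).trans
    (Submodule.finrank_add_le_finrank_add_finrank _ _)

end LinearMap

section ApproximationNumbers

variable {E : Type*} [NormedAddCommGroup E] [InnerProductSpace ℂ E]

theorem mu_le_norm_sub (T F : E →L[ℂ] E) {j : ℕ}
    [FiniteDimensional ℂ (LinearMap.range F.toLinearMap)]
    (hF : Module.finrank ℂ (LinearMap.range F.toLinearMap) ≤ j) : mu T j ≤ ‖T - F‖ :=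
  csInf_le ⟨0, fun _ ⟨_, _, _, hc⟩ => hc ▸ norm_nonneg _⟩ ⟨F, inferInstance, hF, rfl⟩

theorem le_mu {T : E →L[ℂ] E} {j : ℕ} {c : ℝ}
    (h : ∀ F : E →L[ℂ] E, FiniteDimensional ℂ (LinearMap.range F.toLinearMap) →
      Module.finrank ℂ (LinearMap.range F.toLinearMap) ≤ j → c ≤ ‖T - F‖) :
    c ≤ mu T j := by
  have hzero : LinearMap.range (0 : E →L[ℂ] E).toLinearMap = ⊥ := LinearMap.range_zero
  refine le_csInf ⟨‖T - 0‖, 0, ?_, ?_, rfl⟩ fun _ ⟨F, hFfin, hF, hc⟩ => hc ▸ h F hFfin hF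
  · rw [hzero]; infer_instance
  · rw [hzero, finrank_bot]; exact j.zero_le

theorem mu_add_le_norm_sub_add_norm_sub (S T F G : E →L[ℂ] E) {j k : ℕ}
    [FiniteDimensional ℂ (LinearMap.range F.toLinearMap)]
    [FiniteDimensional ℂ (LinearMap.range G.toLinearMap)]
    (hF : Module.finrank ℂ (LinearMap.range F.toLinearMap) ≤ j)
    (hG : Module.finrank ℂ (LinearMap.range G.toLinearMap) ≤ k) :
    mu (S + T) (j + k) ≤ ‖S - F‖ + ‖T - G‖ := by
  have : FiniteDimensional ℂ (LinearMap.range (F + G).toLinearMap) :=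
    LinearMap.finiteDimensional_range_add F.toLinearMap G.toLinearMap
  calc mu (S + T) (j + k) ≤ ‖(S + T) - (F + G)‖ :=
      mu_le_norm_sub _ _ <| (LinearMap.finrank_range_add_le _ _).trans (add_le_add hF hG)
    _ = ‖(S - F) + (T - G)‖ := by rw [add_sub_add_comm]
    _ ≤ ‖S - F‖ + ‖T - G‖ := norm_add_le _ _

end ApproximationNumbers

theorem singularValue_add_le_general
    (S T : H →L[ℂ] H) (j k : ℕ) :
    mu (S + T) (j + k) ≤ mu S j + mu T k := by
  suffices mu (S + T) (j + k) - mu T k ≤ mu S j by linarith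
  refine le_mu fun F _ hF => ?_
  suffices mu (S + T) (j + k) - ‖S - F‖ ≤ mu T k by linarith
  refine le_mu fun G _ hG => ?_
  linarith [mu_add_le_norm_sub_add_norm_sub S T F G hF hG]

/-- Ky Fan's inequality for singular values: `μ_{j+k}(S+T) ≤ μ_j(S) + μ_k(T)`. -/
theorem singularValue_add_le [SecondCountableTopology H]
    (S T : H →L[ℂ] H) (hS : IsCompactOperator ⇑S) (hT : IsCompactOperator ⇑T) (j k : ℕ) :
    mu (S + T) (j + k) ≤ mu S j + mu T k :=
  singularValue_add_le_general S T j k
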